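/- arXiv:0711.1942 — 5 statements merged into one kernel-verified Lean document; each statement's English description precedes it below -/
import Mathlib

section
/- Let u(x) be a polynomial with rational coefficients and k a positive integer. The polynomial Φ_k(u(x)) has an irreducible factor of degree φ(k) over ℚ if and only if the equation u(z) = ζ_k has a solution z ∈ ℚ(ζ_k), where ζ_k is a primitive k-th root of unity and φ is Euler's totient function. -/
/-!
If `p` is an irreducible factor of `Φ_k ∘ u` of degree `φ(k)`, then in `L = ℚ[x]/(p)` the element
`β = u(x̄)` is a primitive `k`-th root of unity. Since `ℚ(β)` already has degree `φ(k) = [L : ℚ]`,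
`L = ℚ(β)` is the `k`-th cyclotomic field, and `x̄` is a solution of `u(z) = β` there.
Conversely, if `u(z) = ζ` in `ℚ(ζ_k)`, then `ζ ∈ ℚ[z]`, so `z` generates `ℚ(ζ_k)`; its minimal
polynomial then has degree `φ(k)` and divides `Φ_k ∘ u`.
-/

open Polynomial

section Cyclotomic

variable {F L : Type*} [Field F] [Field L] [Algebra F L] {n : ℕ}

theorem aeval_cyclotomic_eq_zero_iff [NeZero (n : F)] {β : L} :
    aeval β (cyclotomic n F) = 0 ↔ IsPrimitiveRoot β n := by
  have := NeZero.of_faithfulSMul F L n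
  rw [aeval_def, eval₂_eq_eval_map, map_cyclotomic]
  exact isRoot_cyclotomic_iff

theorem IsPrimitiveRoot.adjoin_eq_top_of_finrank_eq_totient [NeZero (n : F)]
    (hirr : Irreducible (cyclotomic n F)) (hL : Module.finrank F L = n.totient) {ζ : L}
    (hζ : IsPrimitiveRoot ζ n) : Algebra.adjoin F {ζ} = ⊤ := by
  have := NeZero.of_neZero_natCast F (n := n)
  have : FiniteDimensional F L :=
    Module.finite_of_finrank_pos (hL ▸ Nat.totient_pos.2 (NeZero.pos n))
  have hint : IsIntegral F ζ := .of_finite F ζ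
  rw [← IntermediateField.adjoin_simple_eq_top_iff_of_isAlgebraic hint.isAlgebraic]
  refine IntermediateField.eq_of_le_of_finrank_eq le_top ?_
  rw [IntermediateField.finrank_top', IntermediateField.adjoin.finrank hint,
    ← hζ.minpoly_eq_cyclotomic_of_irreducible hirr, natDegree_cyclotomic, hL]

theorem IsCyclotomicExtension.of_finrank_eq_totient [NeZero (n : F)]
    (hirr : Irreducible (cyclotomic n F)) (hL : Module.finrank F L = n.totient) {ζ : L}
    (hζ : IsPrimitiveRoot ζ n) : IsCyclotomicExtension {n} F L := by
  have := NeZero.of_neZero_natCast F (n := n)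
  have htop := hζ.adjoin_eq_top_of_finrank_eq_totient hirr hL
  refine (IsCyclotomicExtension.iff_singleton n F L).2 ⟨⟨ζ, hζ⟩, fun x => ?_⟩
  have hx : x ∈ Algebra.adjoin F {ζ} := by rw [htop]; exact Algebra.mem_top
  have hsub : ({ζ} : Set L) ⊆ {b : L | b ^ n = 1} := Set.singleton_subset_iff.2 hζ.pow_eq_one
  exact Algebra.adjoin_mono hsub hx

theorem IsCyclotomicExtension.natDegree_minpoly_eq_totient_of_mem_adjoin [NeZero n]
    [IsCyclotomicExtension {n} F L] (hirr : Irreducible (cyclotomic n F)) {ζ z : L}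
    (hζ : IsPrimitiveRoot ζ n) (hmem : ζ ∈ Algebra.adjoin F {z}) :
    (minpoly F z).natDegree = n.totient := by
  have : FiniteDimensional F L := IsCyclotomicExtension.finiteDimensional {n} F L
  have hz : IsIntegral F z := .of_finite F z
  have htop : Algebra.adjoin F {z} = ⊤ := by
    rw [← top_le_iff, ← IsCyclotomicExtension.adjoin_primitive_root_eq_top hζ,
      Algebra.adjoin_le_iff, Set.singleton_subset_iff]
    exact hmem
  rw [← PowerBasis.ofAdjoinEqTop_dim hz htop, ← PowerBasis.finrank]
  exact IsCyclotomicExtension.finrank L hirr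

end Cyclotomic

theorem stmt_12 (k : ℕ+) (u : ℚ[X]) :
    (∃ p : ℚ[X], Irreducible p ∧ p ∣ (cyclotomic k ℚ).comp u ∧
        p.natDegree = Nat.totient k) ↔
      (∃ ζ z : CyclotomicField k ℚ, IsPrimitiveRoot ζ (k : ℕ) ∧ aeval z u = ζ) := by
  have hirr := cyclotomic.irreducible_rat k.pos
  have : NeZero ((k : ℕ) : ℚ) := ⟨by exact_mod_cast k.ne_zero⟩
  have : IsCyclotomicExtension {(k : ℕ)} ℚ (CyclotomicField k ℚ) :=
    CyclotomicField.isCyclotomicExtension (k : ℕ) ℚ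
  constructor
  · rintro ⟨p, hp, hdvd, hdeg⟩
    have := Fact.mk hp
    have hβ : IsPrimitiveRoot (aeval (AdjoinRoot.root p) u) k := by
      rw [← aeval_cyclotomic_eq_zero_iff (F := ℚ), ← aeval_comp]
      exact aeval_eq_zero_of_dvd_aeval_eq_zero hdvd (AdjoinRoot.aeval_eq p ▸ AdjoinRoot.mk_self)
    have : IsCyclotomicExtension {(k : ℕ)} ℚ (AdjoinRoot p) :=
      .of_finrank_eq_totient hirr ((AdjoinRoot.powerBasis hp.ne_zero).finrank.trans hdeg) hβ
    let e := IsCyclotomicExtension.algEquiv {(k : ℕ)} ℚ (AdjoinRoot p) (CyclotomicField k ℚ)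
    exact ⟨_, e (AdjoinRoot.root p), hβ.map_of_injective e.injective, aeval_algHom_apply e _ _⟩
  · rintro ⟨ζ, z, hζ, rfl⟩
    have hz : IsIntegral ℚ z := .of_finite ℚ z
    refine ⟨minpoly ℚ z, minpoly.irreducible hz, minpoly.dvd _ _ ?_,
      IsCyclotomicExtension.natDegree_minpoly_eq_totient_of_mem_adjoin hirr hζ
        (aeval_mem_adjoin_singleton ℚ z)⟩
    rw [aeval_comp, aeval_cyclotomic_eq_zero_iff]
    exact hζ
end

section
/- Let u(x) = 2x^3 + 4x^2 + 6x + 3. Then Φ₈(u(x)) = (u(x))⁴ + 1 has an irreducible factor of degree 4 over ℚ. -/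
/-!
The factor is `X ^ 4 + (X + 1) ^ 4 = (X + 1) ^ 4 * Φ₈ (X / (X + 1))`. Its reversal is
`Φ₈ (X + 1)`, irreducible because `Φ₈` is, and reversing a polynomial with nonzero constant
term preserves irreducibility.
-/

open Polynomial

theorem Polynomial.cyclotomic_eight (R : Type*) [CommRing R] : cyclotomic 8 R = X ^ 4 + 1 := by
  rw [show 8 = 2 ^ (2 + 1) by norm_num, cyclotomic_prime_pow_eq_geom_sum Nat.prime_two]
  simp [Finset.sum_range_succ, add_comm]

theorem Polynomial.isUnit_reverse_iff {K : Type*} [Field K] {f : K[X]} (h0 : f.coeff 0 ≠ 0) :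
    IsUnit f.reverse ↔ IsUnit f := by
  have hf : f ≠ 0 := fun h => h0 (by simp [h])
  rw [isUnit_iff_degree_eq_zero, isUnit_iff_degree_eq_zero, degree_eq_natDegree hf,
    degree_eq_natDegree (reverse_eq_zero.not.mpr hf), reverse_natDegree,
    natTrailingDegree_eq_zero.mpr (Or.inr h0), Nat.sub_zero]

theorem Polynomial.irreducible_of_irreducible_reverse {K : Type*} [Field K] {f : K[X]}
    (h0 : f.coeff 0 ≠ 0) (hf : Irreducible f.reverse) : Irreducible f := by
  refine ⟨fun h => hf.not_isUnit ((isUnit_reverse_iff h0).mpr h), fun a b hab => ?_⟩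
  have hab0 : a.coeff 0 * b.coeff 0 ≠ 0 := by rwa [← mul_coeff_zero, ← hab]
  rw [← isUnit_reverse_iff (left_ne_zero_of_mul hab0),
    ← isUnit_reverse_iff (right_ne_zero_of_mul hab0)]
  exact hf.isUnit_or_isUnit (by rw [hab, reverse_mul_of_domain])

theorem irreducible_X_add_one_pow_four_add_one : Irreducible ((X + 1) ^ 4 + 1 : ℚ[X]) := by
  have h : Irreducible (taylor 1 (cyclotomic 8 ℚ)) :=
    (MulEquiv.irreducible_iff (taylorEquiv (1 : ℚ))).mpr (cyclotomic.irreducible_rat (by norm_num))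
  rwa [taylor_apply, cyclotomic_eight, add_comp, X_pow_comp, one_comp, C_1] at h

theorem natDegree_X_pow_four_add_X_add_one_pow_four :
    (X ^ 4 + (X + 1) ^ 4 : ℚ[X]).natDegree = 4 := by
  compute_degree!

theorem reverse_X_pow_four_add_X_add_one_pow_four :
    (X ^ 4 + (X + 1) ^ 4 : ℚ[X]).reverse = (X + 1) ^ 4 + 1 := by
  ext n
  rw [coeff_reverse, natDegree_X_pow_four_add_X_add_one_pow_four]
  rcases le_or_gt n 4 with hn | hn
  · rw [revAt_le hn]
    interval_cases n <;> simp [coeff_X_add_one_pow, coeff_X_pow, coeff_one]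
  · rw [revAt_eq_self_of_lt hn]
    simp [coeff_X_add_one_pow, coeff_X_pow, coeff_one, Nat.choose_eq_zero_of_lt hn, hn.ne']
    omega

theorem irreducible_X_pow_four_add_X_add_one_pow_four :
    Irreducible (X ^ 4 + (X + 1) ^ 4 : ℚ[X]) := by
  refine irreducible_of_irreducible_reverse (by simp [coeff_X_add_one_pow]) ?_
  rw [reverse_X_pow_four_add_X_add_one_pow_four]
  exact irreducible_X_add_one_pow_four_add_one

theorem stmt_13 :
    ∃ p : ℚ[X], Irreducible p ∧ p.natDegree = 4 ∧
      p ∣ (2 * X ^ 3 + 4 * X ^ 2 + 6 * X + 3 : ℚ[X]) ^ 4 + 1 := by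
  refine ⟨X ^ 4 + (X + 1) ^ 4, irreducible_X_pow_four_add_X_add_one_pow_four,
    natDegree_X_pow_four_add_X_add_one_pow_four, ?_⟩
  exact ⟨8 * X ^ 8 + 48 * X ^ 7 + 168 * X ^ 6 + 384 * X ^ 5 + 628 * X ^ 4 + 736 * X ^ 3
    + 604 * X ^ 2 + 320 * X + 82, by ring⟩
end

section
/- Let u(x) = 9x^3 + 3x^2 + 2x + 1. Then Φ₈(u(x)) has an irreducible factor of degree 4 over ℚ. -/
/-!
The factor is `f = 9X⁴ + 12X³ + 8X² + 4X + 1`, with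
`u⁴ + 1 = f · (729X⁸ + 486X⁶ + 108X⁵ + 108X⁴ + 36X³ + 20X² + 2)`.
Substituting `X ↦ 3X + 1` turns `X⁴ + 2X² + 4X + 2`, which is Eisenstein at `2`, into `9f`;
an affine substitution with invertible slope is a ring automorphism of `ℚ[X]`, so `f` is irreducible.
-/

open Polynomial

theorem Irreducible.comp_C_mul_X_add_C {R : Type*} [CommRing R] {p : R[X]} (hp : Irreducible p)
    {a : R} (ha : IsUnit a) (b : R) : Irreducible (p.comp (C a * X + C b)) := by
  let _ : Invertible a := ha.invertible
  rw [comp_eq_aeval, ← algEquivCMulXAddC_apply]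
  exact (MulEquiv.irreducible_iff (algEquivCMulXAddC a b)).2 hp

noncomputable def eisensteinQuartic : ℤ[X] := X ^ 4 + 2 * X ^ 2 + 4 * X + 2

theorem eisensteinQuartic_natDegree : eisensteinQuartic.natDegree = 4 := by
  unfold eisensteinQuartic; compute_degree!

theorem eisensteinQuartic_monic : eisensteinQuartic.Monic := by
  unfold eisensteinQuartic; monicity!

theorem eisensteinQuartic_isEisensteinAt_two :
    eisensteinQuartic.IsEisensteinAt (Ideal.span {2}) := by
  refine eisensteinQuartic_monic.isEisensteinAt_of_mem_of_notMem ?_ ?_ ?_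
  · rw [Ne, Ideal.span_singleton_eq_top]; decide
  · intro n hn
    rw [eisensteinQuartic_natDegree] at hn
    rw [Ideal.mem_span_singleton]
    interval_cases n <;> simp [eisensteinQuartic, coeff_X]
  · rw [Ideal.span_singleton_pow, Ideal.mem_span_singleton]
    simp [eisensteinQuartic, coeff_X]

theorem eisensteinQuartic_map_rat_irreducible :
    Irreducible (eisensteinQuartic.map (algebraMap ℤ ℚ)) := by
  have hZ : Irreducible eisensteinQuartic :=
    eisensteinQuartic_isEisensteinAt_two.irreducible
      ((Ideal.span_singleton_prime two_ne_zero).2 Int.prime_two)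
      eisensteinQuartic_monic.isPrimitive (by rw [eisensteinQuartic_natDegree]; norm_num)
  exact (eisensteinQuartic_monic.irreducible_iff_irreducible_map_fraction_map (K := ℚ)).1 hZ

theorem stmt_14 :
    ∃ p : ℚ[X], Irreducible p ∧ p.natDegree = 4 ∧
      p ∣ (9 * X ^ 3 + 3 * X ^ 2 + 2 * X + 1 : ℚ[X]) ^ 4 + 1 := by
  refine ⟨9 * X ^ 4 + 12 * X ^ 3 + 8 * X ^ 2 + 4 * X + 1, ?_, by compute_degree!,
    ⟨729 * X ^ 8 + 486 * X ^ 6 + 108 * X ^ 5 + 108 * X ^ 4 + 36 * X ^ 3 + 20 * X ^ 2 + 2,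
      by ring⟩⟩
  have hsubst : (eisensteinQuartic.map (algebraMap ℤ ℚ)).comp (C 3 * X + C 1) =
      C 9 * (9 * X ^ 4 + 12 * X ^ 3 + 8 * X ^ 2 + 4 * X + 1) := by
    simp only [eisensteinQuartic, Polynomial.map_add, Polynomial.map_mul, Polynomial.map_pow,
      Polynomial.map_X, Polynomial.map_ofNat, add_comp, mul_comp, pow_comp, X_comp, ofNat_comp,
      C_1, map_ofNat]
    ring
  have h := eisensteinQuartic_map_rat_irreducible.comp_C_mul_X_add_C
    (isUnit_iff_ne_zero.2 three_ne_zero) 1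
  rwa [hsubst, irreducible_isUnit_mul (isUnit_C.2 (isUnit_iff_ne_zero.2 (by norm_num)))] at h
end

section
/- Let ω = a₀ + a₁ζ₈ + a₂ζ₈² + a₃ζ₈³ with a_i ∈ ℚ, where ζ₈ is a primitive 8th root of unity. Define d = (a₁² + a₃²)((a₁ − a₃)² + 2a₂²)((a₁ + a₃)² − 2a₂²) and n₃ = a₃³ − a₁²a₃ + 2a₁a₂². If d ≠ 0 and n₃ ≠ 0, then there exists a unique cubic polynomial u(x) ∈ ℚ[x] (with nonzero leading coefficient) such that u(ω) = ζ₈. -/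
/-!
Since `ζ⁴ = -1`, powers of `ω` can be computed in the coordinates `1, ζ, ζ², ζ³`. Translating
`ω` by `a₀` reduces to `a₀ = 0`, where solving `ζ = c₀ + c₁ω + c₂ω² + c₃ω³` gives
`cₖ = Nₖ / d` for explicit polynomials `Nₖ` in `a₁, a₂, a₃`, with `N₃ = n₃`. This gives a cubic
`u` with `u(ω) = ζ`. Then `ℚ(ζ) ⊆ ℚ(ω)`, so the minimal polynomial of `ω` has degree at least
`φ(8) = 4`, and two polynomials of degree `3` taking the same value at `ω` coincide.
-/

open Polynomial IntermediateField

theorem aeval_cubic {R A : Type*} [CommSemiring R] [Semiring A] [Algebra R A] (x : A)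
    (c₃ c₂ c₁ c₀ : R) :
    aeval x (C c₃ * X ^ 3 + C c₂ * X ^ 2 + C c₁ * X + C c₀) =
      c₃ • x ^ 3 + c₂ • x ^ 2 + c₁ • x + c₀ • 1 := by
  simp [Algebra.smul_def]

section Coordinates

variable {K A : Type*} [Field K] [CommRing A] [Algebra K A] {ζ : A}

def ofCoords (ζ : A) (x₀ x₁ x₂ x₃ : K) : A := x₀ • 1 + x₁ • ζ + x₂ • ζ ^ 2 + x₃ • ζ ^ 3

theorem ofCoords_mul_ofCoords (hζ : ζ ^ 4 = -1) (x₀ x₁ x₂ x₃ y₀ y₁ y₂ y₃ : K) :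
    ofCoords ζ x₀ x₁ x₂ x₃ * ofCoords ζ y₀ y₁ y₂ y₃ =
      ofCoords ζ (x₀ * y₀ - x₁ * y₃ - x₂ * y₂ - x₃ * y₁) (x₀ * y₁ + x₁ * y₀ - x₂ * y₃ - x₃ * y₂)
        (x₀ * y₂ + x₁ * y₁ + x₂ * y₀ - x₃ * y₃) (x₀ * y₃ + x₁ * y₂ + x₂ * y₁ + x₃ * y₀) := by
  simp only [ofCoords, Algebra.smul_def, map_add, map_sub, map_mul, mul_one]
  linear_combination (algebraMap K A x₁ * algebraMap K A y₃ + algebraMap K A x₂ * algebraMap K A y₂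
    + algebraMap K A x₃ * algebraMap K A y₁
    + (algebraMap K A x₂ * algebraMap K A y₃ + algebraMap K A x₃ * algebraMap K A y₂) * ζ
    + algebraMap K A x₃ * algebraMap K A y₃ * ζ ^ 2) * hζ

def cubicDenominator (a₁ a₂ a₃ : K) : K :=
  (a₁ ^ 2 + a₃ ^ 2) * ((a₁ - a₃) ^ 2 + 2 * a₂ ^ 2) * ((a₁ + a₃) ^ 2 - 2 * a₂ ^ 2)

/-- Its coefficients are `cubicDenominator` times the solution `(c₀, …, c₃)`, by Cramer's rule,
of the linear system `c₀ + c₁ ω + c₂ ω² + c₃ ω³ = ζ` for `ω = ofCoords ζ 0 a₁ a₂ a₃`. -/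
noncomputable def cubicNumerator (a₁ a₂ a₃ : K) : K[X] :=
  C (a₃ ^ 3 - a₁ ^ 2 * a₃ + 2 * a₁ * a₂ ^ 2) * X ^ 3
    + C (2 * a₂ ^ 3 * a₃ - 3 * a₁ * a₂ * a₃ ^ 2 - a₁ ^ 3 * a₂) * X ^ 2
    + C (3 * a₂ ^ 2 * a₃ ^ 3 + 3 * a₁ * a₃ ^ 4 + 2 * a₁ * a₂ ^ 4 + 9 * a₁ ^ 2 * a₂ ^ 2 * a₃
      - 4 * a₁ ^ 3 * a₃ ^ 2 + a₁ ^ 5) * X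
    + C (-3 * a₂ * a₃ ^ 5 + 2 * a₂ ^ 5 * a₃ - 5 * a₁ * a₂ ^ 3 * a₃ ^ 2 + 5 * a₁ ^ 3 * a₂ ^ 3
      - 5 * a₁ ^ 4 * a₂ * a₃)

theorem natDegree_cubicNumerator {a₁ a₂ a₃ : K}
    (hn : a₃ ^ 3 - a₁ ^ 2 * a₃ + 2 * a₁ * a₂ ^ 2 ≠ 0) :
    (cubicNumerator a₁ a₂ a₃).natDegree = 3 :=
  natDegree_cubic hn

theorem aeval_cubicNumerator (hζ : ζ ^ 4 = -1) (a₁ a₂ a₃ : K) :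
    aeval (ofCoords ζ 0 a₁ a₂ a₃) (cubicNumerator a₁ a₂ a₃) = cubicDenominator a₁ a₂ a₃ • ζ := by
  rw [cubicNumerator, aeval_cubic, pow_three' (ofCoords ζ 0 a₁ a₂ a₃), sq (ofCoords ζ 0 a₁ a₂ a₃),
    ofCoords_mul_ofCoords hζ, ofCoords_mul_ofCoords hζ]
  simp only [ofCoords, cubicDenominator]
  module

theorem exists_natDegree_eq_three_aeval_ofCoords_eq (hζ : ζ ^ 4 = -1) {a₁ a₂ a₃ : K}
    (hd : cubicDenominator a₁ a₂ a₃ ≠ 0) (hn : a₃ ^ 3 - a₁ ^ 2 * a₃ + 2 * a₁ * a₂ ^ 2 ≠ 0)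
    (a₀ : K) : ∃ u : K[X], u.natDegree = 3 ∧ aeval (ofCoords ζ a₀ a₁ a₂ a₃) u = ζ := by
  refine ⟨C (cubicDenominator a₁ a₂ a₃)⁻¹ * (cubicNumerator a₁ a₂ a₃).comp (X - C a₀), ?_, ?_⟩
  · rw [natDegree_C_mul (inv_ne_zero hd), natDegree_comp, natDegree_cubicNumerator hn,
      natDegree_X_sub_C]
  · have hshift : ofCoords ζ a₀ a₁ a₂ a₃ - algebraMap K A a₀ = ofCoords ζ 0 a₁ a₂ a₃ := by
      simp only [ofCoords, Algebra.algebraMap_eq_smul_one]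
      module
    rw [map_mul, aeval_C, aeval_comp, map_sub, aeval_X, aeval_C, hshift,
      aeval_cubicNumerator hζ, ← Algebra.smul_def, inv_smul_smul₀ hd]

end Coordinates

theorem natDegree_minpoly_aeval_dvd {F L : Type*} [Field F] [Field L] [Algebra F L] {x : L}
    (hx : IsIntegral F x) (p : F[X]) :
    (minpoly F (aeval x p)).natDegree ∣ (minpoly F x).natDegree := by
  have := adjoin.finiteDimensional hx
  have hp : aeval x p = (aeval (AdjoinSimple.gen F x) p : L) :=
    aeval_coe F⟮x⟯ (AdjoinSimple.gen F x) p
  rw [← adjoin.finrank hx, hp, ← minpoly_eq]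
  exact minpoly.degree_dvd (.of_finite F _)

theorem eq_of_aeval_eq_of_natDegree_lt {F A : Type*} [Field F] [Ring A] [Algebra F A] {x : A}
    {u v : F[X]} (hu : u.natDegree < (minpoly F x).natDegree)
    (hv : v.natDegree < (minpoly F x).natDegree) (h : aeval x u = aeval x v) : u = v := by
  by_contra hne
  have hle := natDegree_le_natDegree <|
    minpoly.degree_le_of_ne_zero F x (sub_ne_zero.mpr hne) (by rw [map_sub, h, sub_self])
  have := natDegree_sub_le u v
  omega

theorem stmt_15 (ζ : CyclotomicField 8 ℚ) (hζ : IsPrimitiveRoot ζ 8)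
    (a₀ a₁ a₂ a₃ : ℚ)
    (hd : (a₁ ^ 2 + a₃ ^ 2) * ((a₁ - a₃) ^ 2 + 2 * a₂ ^ 2) *
        ((a₁ + a₃) ^ 2 - 2 * a₂ ^ 2) ≠ 0)
    (hn : a₃ ^ 3 - a₁ ^ 2 * a₃ + 2 * a₁ * a₂ ^ 2 ≠ 0) :
    ∃! u : ℚ[X], u.natDegree = 3 ∧
      aeval (a₀ • (1 : CyclotomicField 8 ℚ) + a₁ • ζ + a₂ • ζ ^ 2 + a₃ • ζ ^ 3) u = ζ := by
  change ∃! u : ℚ[X], u.natDegree = 3 ∧ aeval (ofCoords ζ a₀ a₁ a₂ a₃) u = ζ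
  have hζ4 : ζ ^ 4 = -1 :=
    (hζ.pow_of_dvd (by norm_num) (by norm_num : 4 ∣ 8)).eq_neg_one_of_two_right
  obtain ⟨u, hu3, hu⟩ := exists_natDegree_eq_three_aeval_ofCoords_eq hζ4 hd hn a₀
  have hω := IsIntegral.of_finite ℚ (ofCoords ζ a₀ a₁ a₂ a₃)
  have hdeg : 4 ≤ (minpoly ℚ (ofCoords ζ a₀ a₁ a₂ a₃)).natDegree := by
    have hdvd := natDegree_minpoly_aeval_dvd hω u
    rw [hu, ← cyclotomic_eq_minpoly_rat hζ (by norm_num), natDegree_cyclotomic] at hdvd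
    exact Nat.le_of_dvd (minpoly.natDegree_pos hω) hdvd
  exact ⟨u, ⟨hu3, hu⟩, fun v ⟨hv3, hv⟩ ↦
    eq_of_aeval_eq_of_natDegree_lt (by omega) (by omega) (hv.trans hu.symm)⟩
end

section
/- Let u(x) = -82x^3 - 108x^2 - 54x - 9 and r(x) = 82x^4 + 108x^3 + 54x^2 + 12x + 1. In the quotient ring ℚ[x]/(r(x)), the residue class of u(x) is a primitive 8th root of unity, i.e., u(x)⁸ ≡ 1 (mod r(x)) and u(x)⁴ ≢ 1 (mod r(x)). -/
/-! The residue of `u` is a square root of `-1` modulo `r`: `r ∣ u ^ 4 + 1`, with an explicit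
quotient. Hence `u ^ 8 = (u ^ 4 + 1) (u ^ 4 - 1) + 1 ≡ 1`, while `u ^ 4 ≡ 1` would give `r ∣ 2`,
impossible for a polynomial of degree `4`. -/

open Polynomial

theorem dvd_pow_two_mul_sub_one_of_dvd_pow_add_one {R : Type*} [CommRing R] {r u : R} {n : ℕ}
    (h : r ∣ u ^ n + 1) : r ∣ u ^ (2 * n) - 1 :=
  (h.mul_right (u ^ n - 1)).trans (dvd_of_eq (by ring))

theorem not_dvd_pow_sub_one_of_dvd_pow_add_one {R : Type*} [CommRing R] {r u : R} {n : ℕ}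
    (h : r ∣ u ^ n + 1) (h2 : ¬ r ∣ 2) : ¬ r ∣ u ^ n - 1 := fun h' =>
  h2 <| (dvd_sub h h').trans (dvd_of_eq (by ring))

theorem Polynomial.not_dvd_C_of_natDegree_pos {R : Type*} [Semiring R] [NoZeroDivisors R]
    {p : R[X]} {a : R} (hp : 0 < p.natDegree) (ha : a ≠ 0) : ¬ p ∣ C a := fun h => by
  have := natDegree_le_of_dvd h (C_ne_zero.2 ha)
  rw [natDegree_C] at this
  omega

theorem quartic_dvd_pow_four_add_one :
    (82 * X ^ 4 + 108 * X ^ 3 + 54 * X ^ 2 + 12 * X + 1 : ℚ[X]) ∣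
      (-82 * X ^ 3 - 108 * X ^ 2 - 54 * X - 9 : ℚ[X]) ^ 4 + 1 :=
  ⟨6562 + 78720 * X + 433116 * X ^ 2 + 1419552 * X ^ 3 + 3025268 * X ^ 4 + 4290432 * X ^ 5 +
    3958632 * X ^ 6 + 2178576 * X ^ 7 + 551368 * X ^ 8, by ring⟩

theorem quartic_not_dvd_two :
    ¬ (82 * X ^ 4 + 108 * X ^ 3 + 54 * X ^ 2 + 12 * X + 1 : ℚ[X]) ∣ 2 := by
  have hdeg : (82 * X ^ 4 + 108 * X ^ 3 + 54 * X ^ 2 + 12 * X + 1 : ℚ[X]).natDegree = 4 := by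
    compute_degree!
  rw [← C_ofNat (R := ℚ) 2]
  exact not_dvd_C_of_natDegree_pos (by omega) two_ne_zero

theorem stmt_19 :
    (82 * X ^ 4 + 108 * X ^ 3 + 54 * X ^ 2 + 12 * X + 1 : ℚ[X]) ∣
        (-82 * X ^ 3 - 108 * X ^ 2 - 54 * X - 9 : ℚ[X]) ^ 8 - 1 ∧
    ¬ (82 * X ^ 4 + 108 * X ^ 3 + 54 * X ^ 2 + 12 * X + 1 : ℚ[X]) ∣
        (-82 * X ^ 3 - 108 * X ^ 2 - 54 * X - 9 : ℚ[X]) ^ 4 - 1 :=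
  ⟨dvd_pow_two_mul_sub_one_of_dvd_pow_add_one quartic_dvd_pow_four_add_one,
    not_dvd_pow_sub_one_of_dvd_pow_add_one quartic_dvd_pow_four_add_one quartic_not_dvd_two⟩
end
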